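/- (Lower bound for the surface area.) Let γ : [a,b] → ℝ³ be a C² regular unit-speed curve with frame T = γ', C¹ unit normal field N, B = T × N, κ_n = ⟨T', N⟩, κ_g = −⟨T', B⟩, and let u, v : [a,b] × [0,c] → ℝ be C¹ functions with 1 − u(s,t)·κ_n(s) + v(s,t)·κ_g(s) > 0 for all (s,t). Define p(s,t) = γ(s) + u(s,t)·N(s) + v(s,t)·B(s), and for each s set L(s) = ∫₀^c √(u_t² + v_t²) dt, and, when L(s) ≠ 0, ū(s) = L(s)⁻¹∫₀^c u·√(u_t² + v_t²) dt and v̄(s) = L(s)⁻¹∫₀^c v·√(u_t² + v_t²) dt (set ū(s) = v̄(s) = 0 when L(s) = 0). Then the surface area satisfies ∫_a^b ∫₀^c |p_s × p_t| dt ds ≥ ∫_a^b L(s)·(1 − (ū(s)·κ_n(s) − v̄(s)·κ_g(s))) ds, with equality if and only if (u_s − τ_g·v)·v_t − (v_s + τ_g·u)·u_t = 0 almost everywhere, where τ_g = ⟨N', B⟩. -/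

import Mathlib

open MeasureTheory Set
open scoped RealInnerProductSpace

noncomputable section

abbrev E3 := EuclideanSpace ℝ (Fin 3)

/-- The cross product on `ℝ³`. -/
def cross3 (x y : E3) : E3 :=
  (WithLp.equiv 2 (Fin 3 → ℝ)).symm
    (crossProduct ((WithLp.equiv 2 (Fin 3 → ℝ)) x) ((WithLp.equiv 2 (Fin 3 → ℝ)) y))

open Matrix

set_option maxHeartbeats 1000000

lemma inner_eq_dot (x y : E3) :
    ⟪x, y⟫ = ((WithLp.equiv 2 (Fin 3 → ℝ)) x) ⬝ᵥ ((WithLp.equiv 2 (Fin 3 → ℝ)) y) := by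
  simp [PiLp.inner_apply, dotProduct, mul_comm]

lemma inner_cross_left (x y : E3) : ⟪cross3 x y, x⟫ = 0 := by
  rw [inner_eq_dot]
  simp [cross3, cross_apply, vecHead, vecTail, WithLp.equiv_apply, Function.comp]
  ring

lemma inner_cross_right (x y : E3) : ⟪cross3 x y, y⟫ = 0 := by
  rw [inner_eq_dot]
  simp [cross3, cross_apply, vecHead, vecTail, WithLp.equiv_apply, Function.comp]
  ring

lemma inner_cross_cross (x y z w : E3) :
    ⟪cross3 x y, cross3 z w⟫ = ⟪x,z⟫ * ⟪y,w⟫ - ⟪x,w⟫ * ⟪y,z⟫ := by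
  simp only [inner_eq_dot, cross3, WithLp.equiv_symm_apply]
  exact cross_dot_cross _ _ _ _

lemma inner_cross_cyclic (x y z : E3) : ⟪cross3 x y, z⟫ = ⟪cross3 y z, x⟫ := by
  simp only [inner_eq_dot, cross3, WithLp.equiv_symm_apply, cross_apply, dotProduct,
    Fin.sum_univ_three]
  simp [vecHead, vecTail, WithLp.equiv_apply, Function.comp]
  ring

lemma cross3_anticomm (x y : E3) : cross3 x y = -cross3 y x := by
  ext i
  fin_cases i <;>
    simp [cross3, cross_apply, WithLp.equiv_symm_apply, WithLp.equiv_apply,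
      vecHead, vecTail, Function.comp] <;> ring

lemma norm_cross_sq (x y : E3) :
    ‖cross3 x y‖ ^ 2 = ‖x‖ ^ 2 * ‖y‖ ^ 2 - ⟪x,y⟫ ^ 2 := by
  have h := inner_cross_cross x y x y
  rw [real_inner_self_eq_norm_sq] at h
  rw [real_inner_comm y x] at h
  rw [h, ← real_inner_self_eq_norm_sq, ← real_inner_self_eq_norm_sq]
  rw [real_inner_comm y x]
  ring

def crossCLM : E3 →L[ℝ] E3 →L[ℝ] E3 :=
  LinearMap.toContinuousLinearMap
  { toFun := fun x => LinearMap.toContinuousLinearMap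
      (((WithLp.linearEquiv 2 ℝ (Fin 3 → ℝ)).symm.toLinearMap.comp
        (crossProduct ((WithLp.equiv 2 (Fin 3 → ℝ)) x))).comp
        (WithLp.linearEquiv 2 ℝ (Fin 3 → ℝ)).toLinearMap)
    map_add' := by
      intro x y
      ext z i
      simp [WithLp.linearEquiv, cross3]
    map_smul' := by
      intro c x
      ext z i
      simp [WithLp.linearEquiv, cross3] }

lemma crossCLM_apply (x y : E3) : crossCLM x y = cross3 x y := rfl

lemma hasDerivWithinAt_cross {f g : ℝ → E3} {f' g' : E3} {s : Set ℝ} {x : ℝ}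
    (hf : HasDerivWithinAt f f' s x) (hg : HasDerivWithinAt g g' s x) :
    HasDerivWithinAt (fun t => cross3 (f t) (g t)) (cross3 f' (g x) + cross3 (f x) g') s x := by
  have hb : IsBoundedBilinearMap ℝ (fun p : E3 × E3 => cross3 p.1 p.2) := by
    have := crossCLM.isBoundedBilinearMap
    simpa [crossCLM_apply] using this
  have h1 := (hb.hasFDerivAt (f x, g x)).comp_hasDerivWithinAt x (hf.prodMk hg)
  have e1 : (hb.toContinuousLinearMap (f x)) g' = cross3 (f x) g' := rfl
  have e2 : (hb.toContinuousLinearMap f') (g x) = cross3 f' (g x) := rfl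
  have h2 := h1
  simp only [IsBoundedBilinearMap.deriv] at h2
  convert h2 using 1
  · rfl
  · rfl
  · rfl
  · rfl
  · rw [add_comm]; rfl

lemma contDiff_cross : ContDiff ℝ (⊤ : ℕ∞) (fun p : E3 × E3 => cross3 p.1 p.2) := by
  have hb : IsBoundedBilinearMap ℝ (fun p : E3 × E3 => cross3 p.1 p.2) := by
    have := crossCLM.isBoundedBilinearMap
    simpa [crossCLM_apply] using this
  exact hb.contDiff

lemma orthonormal_expansion {T N B : E3}
    (hTT : ⟪T,T⟫ = 1) (hNN : ⟪N,N⟫ = 1) (hBB : ⟪B,B⟫ = 1)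
    (hTN : ⟪T,N⟫ = 0) (hTB : ⟪T,B⟫ = 0) (hNB : ⟪N,B⟫ = 0) (x : E3) :
    x = ⟪T,x⟫ • T + ⟪N,x⟫ • N + ⟪B,x⟫ • B := by
  set f : Fin 3 → E3 := ![T, N, B] with hf
  have honb : Orthonormal ℝ f := by
    rw [orthonormal_iff_ite]
    intro i j
    fin_cases i <;> fin_cases j <;>
      simp_all [f, real_inner_comm T N, real_inner_comm T B, real_inner_comm N B]
  have hcard : Fintype.card (Fin 3) = Module.finrank ℝ E3 := by
    simp [finrank_euclideanSpace_fin]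
  have hsp : ⊤ ≤ Submodule.span ℝ (Set.range f) :=
    (honb.linearIndependent.span_eq_top_of_card_eq_finrank hcard).ge
  let b : OrthonormalBasis (Fin 3) ℝ E3 := OrthonormalBasis.mk honb hsp
  have hb : ∀ i, b i = f i := fun i => by simp [b, OrthonormalBasis.coe_mk]
  have := b.sum_repr' x
  rw [Fin.sum_univ_three] at this
  rw [hb 0, hb 1, hb 2] at this
  simp only [hf, Matrix.cons_val_zero, Matrix.cons_val_one, Matrix.head_cons] at this
  exact this.symm

/-- **lower bound for the surface area.** For the boundary parametrization
`p(s,t) = γ(s) + u(s,t)·N(s) + v(s,t)·B(s)` with `1 − u·κₙ + v·κ_g > 0`, the surface area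
satisfies `∫∫ |p_s × p_t| ≥ ∫ L(s)·(1 − (ū(s)·κₙ(s) − v̄(s)·κ_g(s))) ds`, with equality
iff `(u_s − τ_g·v)·v_t − (v_s + τ_g·u)·u_t = 0` almost everywhere. -/
theorem surface_area_lower_bound
    (a b c : ℝ) (hab : a < b) (hc : 0 < c)
    (γ N : ℝ → E3)
    (hγ : ContDiffOn ℝ 2 γ (Icc a b))
    (hN : ContDiffOn ℝ 1 N (Icc a b))
    (T B : ℝ → E3)
    (hT : T = fun s => derivWithin γ (Icc a b) s)
    (hB : B = fun s => cross3 (T s) (N s))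
    (hγunit : ∀ s ∈ Icc a b, ‖T s‖ = 1)
    (hNunit : ∀ s ∈ Icc a b, ‖N s‖ = 1)
    (hNperp : ∀ s ∈ Icc a b, ⟪N s, T s⟫ = 0)
    (κn κg τg : ℝ → ℝ)
    (hκn : κn = fun s => ⟪derivWithin T (Icc a b) s, N s⟫)
    (hκg : κg = fun s => -⟪derivWithin T (Icc a b) s, B s⟫)
    (hτg : τg = fun s => ⟪derivWithin N (Icc a b) s, B s⟫)
    (S : Set (ℝ × ℝ)) (hS : S = Icc a b ×ˢ Icc 0 c)
    (u v : ℝ × ℝ → ℝ)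
    (hu : ContDiffOn ℝ 1 u S)
    (hv : ContDiffOn ℝ 1 v S)
    -- the condition `1 - u·κₙ + v·κ_g > 0`:
    (hpos : ∀ q ∈ S, 0 < 1 - u q * κn q.1 + v q * κg q.1)
    (p : ℝ × ℝ → E3)
    (hp : p = fun q => γ q.1 + u q • N q.1 + v q • B q.1)
    -- partial derivatives:
    (ps pt : ℝ × ℝ → E3) (us ut vs vt : ℝ × ℝ → ℝ)
    (hps : ps = fun q => fderivWithin ℝ p S q (1, 0))
    (hpt : pt = fun q => fderivWithin ℝ p S q (0, 1))
    (hus : us = fun q => fderivWithin ℝ u S q (1, 0))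
    (hut : ut = fun q => fderivWithin ℝ u S q (0, 1))
    (hvs : vs = fun q => fderivWithin ℝ v S q (1, 0))
    (hvt : vt = fun q => fderivWithin ℝ v S q (0, 1))
    -- the length of the boundary curve of the perpendicular cross-section,
    -- and the coordinates of its centroid (zero if the length vanishes):
    (L ubar vbar : ℝ → ℝ)
    (hL : L = fun s => ∫ t in (0:ℝ)..c, Real.sqrt ((ut (s, t)) ^ 2 + (vt (s, t)) ^ 2))
    (hubar : ubar = fun s =>
      (L s)⁻¹ * ∫ t in (0:ℝ)..c, u (s, t) * Real.sqrt ((ut (s, t)) ^ 2 + (vt (s, t)) ^ 2))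
    (hvbar : vbar = fun s =>
      (L s)⁻¹ * ∫ t in (0:ℝ)..c, v (s, t) * Real.sqrt ((ut (s, t)) ^ 2 + (vt (s, t)) ^ 2)) :
    (∫ q in S, ‖cross3 (ps q) (pt q)‖)
      ≥ (∫ s in a..b, L s * (1 - (ubar s * κn s - vbar s * κg s))) ∧
    ((∫ q in S, ‖cross3 (ps q) (pt q)‖)
        = (∫ s in a..b, L s * (1 - (ubar s * κn s - vbar s * κg s))) ↔
      ∀ᵐ q ∂(volume.restrict S),
        (us q - τg q.1 * v q) * vt q - (vs q + τg q.1 * u q) * ut q = 0) := by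
  -- basic setup
  set I : Set ℝ := Icc a b with hI
  have hIuniq : UniqueDiffOn ℝ I := uniqueDiffOn_Icc hab
  have hJuniq : UniqueDiffOn ℝ (Icc (0:ℝ) c) := uniqueDiffOn_Icc hc
  have hSuniq : UniqueDiffOn ℝ S := by rw [hS]; exact hIuniq.prod hJuniq
  have hSmeas : MeasurableSet S := by rw [hS]; exact measurableSet_Icc.prod measurableSet_Icc
  have hScomp : IsCompact S := by rw [hS]; exact isCompact_Icc.prod isCompact_Icc
  have hfstS : ∀ q ∈ S, q.1 ∈ I := by intro q hq; rw [hS] at hq; exact hq.1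
  have hsndS : ∀ q ∈ S, q.2 ∈ Icc (0:ℝ) c := by intro q hq; rw [hS] at hq; exact hq.2
  -- smoothness of the frame
  have hTc : ContDiffOn ℝ 1 T I := by
    rw [hT]; exact hγ.derivWithin hIuniq (by norm_num)
  have hBc : ContDiffOn ℝ 1 B I := by
    rw [hB]
    exact (contDiff_cross.of_le (mod_cast le_top)).comp_contDiffOn (hTc.prodMk hN)
  set T' : ℝ → E3 := derivWithin T I with hT'
  set N' : ℝ → E3 := derivWithin N I with hN'
  have hTd : ∀ s ∈ I, HasDerivWithinAt T (T' s) I s :=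
    fun s hs => ((hTc.differentiableOn one_ne_zero) s hs).hasDerivWithinAt
  have hNd : ∀ s ∈ I, HasDerivWithinAt N (N' s) I s :=
    fun s hs => ((hN.differentiableOn one_ne_zero) s hs).hasDerivWithinAt
  have hγd : ∀ s ∈ I, HasDerivWithinAt γ (T s) I s := by
    intro s hs
    rw [hT]
    exact ((hγ.differentiableOn (by norm_num)) s hs).hasDerivWithinAt
  set B' : ℝ → E3 := fun s => cross3 (T' s) (N s) + cross3 (T s) (N' s) with hB'd
  have hBd : ∀ s ∈ I, HasDerivWithinAt B (B' s) I s := by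
    intro s hs
    rw [hB]
    exact hasDerivWithinAt_cross (hTd s hs) (hNd s hs)
  have hT'c : ContinuousOn T' I := hTc.continuousOn_derivWithin hIuniq le_rfl
  have hN'c : ContinuousOn N' I := hN.continuousOn_derivWithin hIuniq le_rfl
  -- orthonormality
  have oTT : ∀ s ∈ I, ⟪T s, T s⟫ = 1 := by
    intro s hs; rw [real_inner_self_eq_norm_sq, hγunit s hs]; norm_num
  have oNN : ∀ s ∈ I, ⟪N s, N s⟫ = 1 := by
    intro s hs; rw [real_inner_self_eq_norm_sq, hNunit s hs]; norm_num
  have oTN : ∀ s ∈ I, ⟪T s, N s⟫ = 0 := by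
    intro s hs; rw [real_inner_comm]; exact hNperp s hs
  have oTB : ∀ s ∈ I, ⟪T s, B s⟫ = 0 := by
    intro s hs; rw [hB, real_inner_comm]; exact inner_cross_left _ _
  have oNB : ∀ s ∈ I, ⟪N s, B s⟫ = 0 := by
    intro s hs; rw [hB, real_inner_comm]; exact inner_cross_right _ _
  have oBB : ∀ s ∈ I, ⟪B s, B s⟫ = 1 := by
    intro s hs
    rw [hB]
    show ⟪cross3 (T s) (N s), cross3 (T s) (N s)⟫ = 1
    rw [inner_cross_cross, oTT s hs, oNN s hs, oTN s hs]
    ring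
  -- derivatives of the orthonormality relations
  have dTT : ∀ s ∈ I, ⟪T' s, T s⟫ = 0 := by
    intro s hs
    have h1 : HasDerivWithinAt (fun s => ⟪T s, T s⟫) (⟪T s, T' s⟫ + ⟪T' s, T s⟫) I s :=
      HasDerivWithinAt.inner ℝ (hTd s hs) (hTd s hs)
    have h2 : HasDerivWithinAt (fun s => ⟪T s, T s⟫) 0 I s :=
      (hasDerivWithinAt_const s I (1:ℝ)).congr (fun t ht => oTT t ht) (oTT s hs)
    have h3 := (h1.derivWithin (hIuniq s hs)).symm.trans (h2.derivWithin (hIuniq s hs))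
    have h4 : ⟪T s, T' s⟫ = ⟪T' s, T s⟫ := real_inner_comm _ _
    linarith
  have dNN : ∀ s ∈ I, ⟪N' s, N s⟫ = 0 := by
    intro s hs
    have h1 : HasDerivWithinAt (fun s => ⟪N s, N s⟫) (⟪N s, N' s⟫ + ⟪N' s, N s⟫) I s :=
      HasDerivWithinAt.inner ℝ (hNd s hs) (hNd s hs)
    have h2 : HasDerivWithinAt (fun s => ⟪N s, N s⟫) 0 I s :=
      (hasDerivWithinAt_const s I (1:ℝ)).congr (fun t ht => oNN t ht) (oNN s hs)
    have h3 := (h1.derivWithin (hIuniq s hs)).symm.trans (h2.derivWithin (hIuniq s hs))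
    have h4 : ⟪N s, N' s⟫ = ⟪N' s, N s⟫ := real_inner_comm _ _
    linarith
  have dNT : ∀ s ∈ I, ⟪N' s, T s⟫ = -κn s := by
    intro s hs
    have h1 : HasDerivWithinAt (fun s => ⟪T s, N s⟫) (⟪T s, N' s⟫ + ⟪T' s, N s⟫) I s :=
      HasDerivWithinAt.inner ℝ (hTd s hs) (hNd s hs)
    have h2 : HasDerivWithinAt (fun s => ⟪T s, N s⟫) 0 I s :=
      (hasDerivWithinAt_const s I (0:ℝ)).congr (fun t ht => oTN t ht) (oTN s hs)
    have h3 := (h1.derivWithin (hIuniq s hs)).symm.trans (h2.derivWithin (hIuniq s hs))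
    have h4 : ⟪T s, N' s⟫ = ⟪N' s, T s⟫ := real_inner_comm _ _
    have hκ : κn s = ⟪T' s, N s⟫ := by rw [hκn]
    linarith
  -- inner products of B'
  have bT : ∀ s ∈ I, ⟪B' s, T s⟫ = κg s := by
    intro s hs
    rw [hB'd]
    show ⟪cross3 (T' s) (N s) + cross3 (T s) (N' s), T s⟫ = κg s
    rw [inner_add_left]
    have e1 : ⟪cross3 (T' s) (N s), T s⟫ = κg s := by
      rw [inner_cross_cyclic, cross3_anticomm (N s) (T s), inner_neg_left]
      have : κg s = -⟪T' s, B s⟫ := by rw [hκg]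
      rw [this, hB]
      show -⟪cross3 (T s) (N s), T' s⟫ = -⟪T' s, cross3 (T s) (N s)⟫
      rw [real_inner_comm]
    have e2 : ⟪cross3 (T s) (N' s), T s⟫ = 0 := by
      rw [inner_cross_cyclic]
      exact inner_cross_right _ _
    rw [e1, e2, add_zero]
  have bN : ∀ s ∈ I, ⟪B' s, N s⟫ = -τg s := by
    intro s hs
    rw [hB'd]
    show ⟪cross3 (T' s) (N s) + cross3 (T s) (N' s), N s⟫ = -τg s
    rw [inner_add_left]
    have e1 : ⟪cross3 (T' s) (N s), N s⟫ = 0 := inner_cross_right _ _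
    have e2 : ⟪cross3 (T s) (N' s), N s⟫ = -τg s := by
      rw [inner_cross_cyclic, cross3_anticomm (N' s) (N s), inner_neg_left]
      have h4 : τg s = ⟪N' s, B s⟫ := by rw [hτg]
      rw [h4, hB]
      show -⟪cross3 (N s) (N' s), T s⟫ = -⟪N' s, cross3 (T s) (N s)⟫
      have h5 : ⟪N' s, cross3 (T s) (N s)⟫ = ⟪cross3 (N s) (N' s), T s⟫ :=
        (real_inner_comm _ _).trans (inner_cross_cyclic (T s) (N s) (N' s))
      rw [h5]
    rw [e1, e2, zero_add]
  have bB : ∀ s ∈ I, ⟪B' s, B s⟫ = 0 := by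
    intro s hs
    rw [hB'd, hB]
    show ⟪cross3 (T' s) (N s) + cross3 (T s) (N' s), cross3 (T s) (N s)⟫ = 0
    rw [inner_add_left, inner_cross_cross, inner_cross_cross, dTT s hs, dNN s hs,
      oTN s hs, oTT s hs]
    have h4 : ⟪N s, T s⟫ = 0 := hNperp s hs
    rw [h4]
    ring
  -- expansions of N' and B' in the frame
  have hN'exp : ∀ s ∈ I, N' s = (-κn s) • T s + τg s • B s := by
    intro s hs
    have := orthonormal_expansion (oTT s hs) (oNN s hs) (oBB s hs) (oTN s hs)
      (oTB s hs) (oNB s hs) (N' s)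
    have e1 : ⟪T s, N' s⟫ = -κn s := by rw [real_inner_comm]; exact dNT s hs
    have e2 : ⟪N s, N' s⟫ = 0 := by rw [real_inner_comm]; exact dNN s hs
    have e3 : ⟪B s, N' s⟫ = τg s := by rw [real_inner_comm, hτg]
    rw [e1, e2, e3] at this
    rw [this]
    module
  have hB'exp : ∀ s ∈ I, B' s = κg s • T s + (-τg s) • N s := by
    intro s hs
    have := orthonormal_expansion (oTT s hs) (oNN s hs) (oBB s hs) (oTN s hs)
      (oTB s hs) (oNB s hs) (B' s)
    have e1 : ⟪T s, B' s⟫ = κg s := by rw [real_inner_comm]; exact bT s hs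
    have e2 : ⟪N s, B' s⟫ = -τg s := by rw [real_inner_comm]; exact bN s hs
    have e3 : ⟪B s, B' s⟫ = 0 := by rw [real_inner_comm]; exact bB s hs
    rw [e1, e2, e3] at this
    rw [this]
    module
  -- coefficient functions
  set Al : ℝ × ℝ → ℝ := fun q => 1 - u q * κn q.1 + v q * κg q.1 with hAl
  set Be : ℝ × ℝ → ℝ := fun q => us q - τg q.1 * v q with hBe
  set De : ℝ × ℝ → ℝ := fun q => vs q + τg q.1 * u q with hDe
  have hmap : MapsTo Prod.fst S I := fun r hr => hfstS r hr
  have hexp : ∀ q ∈ S, ps q = Al q • T q.1 + Be q • N q.1 + De q • B q.1 ∧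
      pt q = ut q • N q.1 + vt q • B q.1 := by
    intro q hq
    have hq1 : q.1 ∈ I := hfstS q hq
    have hfst : HasFDerivWithinAt Prod.fst (ContinuousLinearMap.fst ℝ ℝ ℝ) S q :=
      hasFDerivAt_fst.hasFDerivWithinAt
    have hγq : HasFDerivWithinAt (fun r : ℝ × ℝ => γ r.1)
        (((1 : ℝ →L[ℝ] ℝ).smulRight (T q.1)).comp (ContinuousLinearMap.fst ℝ ℝ ℝ)) S q :=
      HasFDerivWithinAt.comp q (hγd q.1 hq1) hfst hmap
    have hNq : HasFDerivWithinAt (fun r : ℝ × ℝ => N r.1)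
        (((1 : ℝ →L[ℝ] ℝ).smulRight (N' q.1)).comp (ContinuousLinearMap.fst ℝ ℝ ℝ)) S q :=
      HasFDerivWithinAt.comp q (hNd q.1 hq1) hfst hmap
    have hBq : HasFDerivWithinAt (fun r : ℝ × ℝ => B r.1)
        (((1 : ℝ →L[ℝ] ℝ).smulRight (B' q.1)).comp (ContinuousLinearMap.fst ℝ ℝ ℝ)) S q :=
      HasFDerivWithinAt.comp q (hBd q.1 hq1) hfst hmap
    have hup : HasFDerivWithinAt u (fderivWithin ℝ u S q) S q :=
      ((hu.differentiableOn one_ne_zero) q hq).hasFDerivWithinAt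
    have hvp : HasFDerivWithinAt v (fderivWithin ℝ v S q) S q :=
      ((hv.differentiableOn one_ne_zero) q hq).hasFDerivWithinAt
    have huN := hup.smul hNq
    have hvB := hvp.smul hBq
    have htot := (hγq.add huN).add hvB
    have hpeq : p = fun r : ℝ × ℝ => γ r.1 + u r • N r.1 + v r • B r.1 := hp
    change HasFDerivWithinAt (fun r : ℝ × ℝ => γ r.1 + u r • N r.1 + v r • B r.1) _ S q at htot
    rw [← hpeq] at htot
    have hfd := htot.fderivWithin (hSuniq q hq)
    constructor
    · have : ps q = fderivWithin ℝ p S q (1, 0) := by rw [hps]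
      rw [this, hfd]
      simp only [ContinuousLinearMap.add_apply, ContinuousLinearMap.coe_smul',
        Pi.smul_apply, ContinuousLinearMap.smulRight_apply, ContinuousLinearMap.comp_apply,
        ContinuousLinearMap.coe_fst', ContinuousLinearMap.one_apply]
      have e1 : fderivWithin ℝ u S q (1, 0) = us q := by rw [hus]
      have e2 : fderivWithin ℝ v S q (1, 0) = vs q := by rw [hvs]
      rw [e1, e2, hN'exp q.1 hq1, hB'exp q.1 hq1, hAl, hBe, hDe]
      module
    · have : pt q = fderivWithin ℝ p S q (0, 1) := by rw [hpt]
      rw [this, hfd]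
      simp only [ContinuousLinearMap.add_apply, ContinuousLinearMap.coe_smul',
        Pi.smul_apply, ContinuousLinearMap.smulRight_apply, ContinuousLinearMap.comp_apply,
        ContinuousLinearMap.coe_fst', ContinuousLinearMap.one_apply]
      have e1 : fderivWithin ℝ u S q (0, 1) = ut q := by rw [hut]
      have e2 : fderivWithin ℝ v S q (0, 1) = vt q := by rw [hvt]
      rw [e1, e2]
      module
  set Dfun : ℝ × ℝ → ℝ := fun q => Be q * vt q - De q * ut q with hDfun
  set Ffun : ℝ × ℝ → ℝ := fun q => ‖cross3 (ps q) (pt q)‖ with hFfun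
  set Gfun : ℝ × ℝ → ℝ := fun q => Al q * Real.sqrt (ut q ^ 2 + vt q ^ 2) with hGfun
  have hAlpos : ∀ q ∈ S, 0 < Al q := fun q hq => hpos q hq
  -- the pointwise formula for the norm of the cross product
  have hFform : ∀ q ∈ S, Ffun q =
      Real.sqrt (Al q ^ 2 * (ut q ^ 2 + vt q ^ 2) + Dfun q ^ 2) := by
    intro q hq
    have hq1 : q.1 ∈ I := hfstS q hq
    have hcombo : ∀ a1 b1 c1 a2 b2 c2 : ℝ,
        ⟪a1 • T q.1 + b1 • N q.1 + c1 • B q.1, a2 • T q.1 + b2 • N q.1 + c2 • B q.1⟫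
          = a1 * a2 + b1 * b2 + c1 * c2 := by
      intro a1 b1 c1 a2 b2 c2
      have e1 := oTT q.1 hq1; have e2 := oNN q.1 hq1; have e3 := oBB q.1 hq1
      have e4 := oTN q.1 hq1; have e5 := oTB q.1 hq1; have e6 := oNB q.1 hq1
      have e7 : ⟪N q.1, T q.1⟫ = 0 := hNperp q.1 hq1
      have e8 : ⟪B q.1, T q.1⟫ = 0 := by rw [real_inner_comm]; exact e5
      have e9 : ⟪B q.1, N q.1⟫ = 0 := by rw [real_inner_comm]; exact e6
      simp only [inner_add_left, inner_add_right, real_inner_smul_left,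
        real_inner_smul_right, e1, e2, e3, e4, e5, e6, e7, e8, e9]
      ring
    have hps0 : ps q = Al q • T q.1 + Be q • N q.1 + De q • B q.1 := (hexp q hq).1
    have hpt0 : pt q = (0:ℝ) • T q.1 + ut q • N q.1 + vt q • B q.1 := by
      rw [(hexp q hq).2]; module
    have hsq : Ffun q ^ 2 = Al q ^ 2 * (ut q ^ 2 + vt q ^ 2) + Dfun q ^ 2 := by
      rw [hFfun]
      simp only
      rw [norm_cross_sq, ← real_inner_self_eq_norm_sq, ← real_inner_self_eq_norm_sq,
        hps0, hpt0, hcombo, hcombo, hcombo, hDfun]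
      ring
    have := Real.sqrt_sq (norm_nonneg (cross3 (ps q) (pt q)))
    rw [hFfun]
    simp only
    rw [← this, hsq]
  -- pointwise inequality and equality characterization
  have hged : ∀ q ∈ S, Gfun q ≤ Ffun q := by
    intro q hq
    rw [hFform q hq, hGfun]
    simp only
    rw [show Al q * Real.sqrt (ut q ^ 2 + vt q ^ 2)
        = Real.sqrt (Al q ^ 2 * (ut q ^ 2 + vt q ^ 2)) by
      rw [Real.sqrt_mul (sq_nonneg _), Real.sqrt_sq (hAlpos q hq).le]]
    exact Real.sqrt_le_sqrt (by nlinarith [sq_nonneg (Dfun q)])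
  have heqiff : ∀ q ∈ S, (Ffun q = Gfun q ↔ Dfun q = 0) := by
    intro q hq
    rw [hFform q hq, hGfun]
    simp only
    rw [show Al q * Real.sqrt (ut q ^ 2 + vt q ^ 2)
        = Real.sqrt (Al q ^ 2 * (ut q ^ 2 + vt q ^ 2)) by
      rw [Real.sqrt_mul (sq_nonneg _), Real.sqrt_sq (hAlpos q hq).le]]
    rw [Real.sqrt_inj (by positivity) (by positivity)]
    constructor
    · intro h; nlinarith [sq_nonneg (Dfun q)]
    · intro h; rw [h]; ring
  -- continuity
  have hutc : ContinuousOn ut S := by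
    rw [hut]
    exact (hu.continuousOn_fderivWithin hSuniq le_rfl).clm_apply continuousOn_const
  have hvtc : ContinuousOn vt S := by
    rw [hvt]
    exact (hv.continuousOn_fderivWithin hSuniq le_rfl).clm_apply continuousOn_const
  have hκnc : ContinuousOn κn I := by
    rw [hκn]; exact hT'c.inner hN.continuousOn
  have hκgc : ContinuousOn κg I := by
    rw [hκg]; exact (hT'c.inner hBc.continuousOn).neg
  have hfstc : ContinuousOn (Prod.fst : ℝ × ℝ → ℝ) S := continuous_fst.continuousOn
  have hAlc : ContinuousOn Al S := by
    rw [hAl]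
    exact (continuousOn_const.sub
      (hu.continuousOn.mul (hκnc.comp hfstc hmap))).add
      (hv.continuousOn.mul (hκgc.comp hfstc hmap))
  have hpC : ContDiffOn ℝ 1 p S := by
    rw [hp]
    exact (((hγ.of_le (by norm_num)).comp contDiff_fst.contDiffOn hmap).add
      (hu.smul (hN.comp contDiff_fst.contDiffOn hmap))).add
      (hv.smul (hBc.comp contDiff_fst.contDiffOn hmap))
  have hpsc : ContinuousOn ps S := by
    rw [hps]
    exact (hpC.continuousOn_fderivWithin hSuniq le_rfl).clm_apply continuousOn_const
  have hptc : ContinuousOn pt S := by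
    rw [hpt]
    exact (hpC.continuousOn_fderivWithin hSuniq le_rfl).clm_apply continuousOn_const
  have hFc : ContinuousOn Ffun S := by
    rw [hFfun]
    exact (contDiff_cross.continuous.comp_continuousOn (hpsc.prodMk hptc)).norm
  have hGc : ContinuousOn Gfun S := by
    rw [hGfun]
    exact hAlc.mul (((hutc.pow 2).add (hvtc.pow 2)).sqrt)
  have hFint : IntegrableOn Ffun S volume := hFc.integrableOn_compact hScomp
  have hGint : IntegrableOn Gfun S volume := hGc.integrableOn_compact hScomp
  -- the integral inequality
  have hle : (∫ q in S, Gfun q) ≤ ∫ q in S, Ffun q :=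
    setIntegral_mono_on hGint hFint hSmeas hged
  -- equality characterization
  have hiff : ((∫ q in S, Ffun q) = ∫ q in S, Gfun q) ↔
      ∀ᵐ q ∂(volume.restrict S), Dfun q = 0 := by
    have h0 : 0 ≤ᵐ[volume.restrict S] fun q => Ffun q - Gfun q := by
      filter_upwards [ae_restrict_mem hSmeas] with q hq
      have := hged q hq
      simp only [Pi.zero_apply]
      linarith
    have hsubint : Integrable (fun q => Ffun q - Gfun q) (volume.restrict S) :=
      hFint.sub hGint
    have hz := integral_eq_zero_iff_of_nonneg_ae h0 hsubint
    rw [integral_sub hFint hGint] at hz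
    constructor
    · intro h
      have : (∫ q in S, Ffun q) - ∫ q in S, Gfun q = 0 := by linarith
      have haeeq := hz.mp this
      filter_upwards [haeeq, ae_restrict_mem hSmeas] with q hq1 hq2
      have : Ffun q - Gfun q = 0 := hq1
      exact (heqiff q hq2).mp (by linarith)
    · intro h
      have haeeq : (fun q => Ffun q - Gfun q) =ᵐ[volume.restrict S] 0 := by
        filter_upwards [h, ae_restrict_mem hSmeas] with q hq1 hq2
        have : Ffun q = Gfun q := (heqiff q hq2).mpr hq1
        simp [this]
      have := hz.mpr haeeq
      linarith
  -- slice continuity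
  have hslice : ∀ s ∈ I, ∀ f : ℝ × ℝ → ℝ, ContinuousOn f S →
      ContinuousOn (fun t => f (s, t)) (Icc (0:ℝ) c) := by
    intro s hs f hf
    refine hf.comp ((continuous_const.prodMk continuous_id).continuousOn) ?_
    intro t ht
    rw [hS]
    exact ⟨hs, ht⟩
  -- the inner integral identity
  have key : ∀ s ∈ I, (∫ t in Icc (0:ℝ) c, Gfun (s, t))
      = L s * (1 - (ubar s * κn s - vbar s * κg s)) := by
    intro s hs
    set sq : ℝ → ℝ := fun t => Real.sqrt (ut (s, t) ^ 2 + vt (s, t) ^ 2) with hsq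
    have hsqc : ContinuousOn sq (Icc (0:ℝ) c) := by
      rw [hsq]
      exact (((hslice s hs ut hutc).pow 2).add ((hslice s hs vt hvtc).pow 2)).sqrt
    have huc : ContinuousOn (fun t => u (s, t)) (Icc (0:ℝ) c) :=
      hslice s hs u hu.continuousOn
    have hvc : ContinuousOn (fun t => v (s, t)) (Icc (0:ℝ) c) :=
      hslice s hs v hv.continuousOn
    have hu01 : uIcc (0:ℝ) c = Icc 0 c := uIcc_of_le hc.le
    have hInt1 : IntervalIntegrable sq volume 0 c :=
      (hu01 ▸ hsqc).intervalIntegrable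
    have hInt2 : IntervalIntegrable (fun t => u (s, t) * sq t) volume 0 c :=
      (hu01 ▸ (huc.mul hsqc)).intervalIntegrable
    have hInt3 : IntervalIntegrable (fun t => v (s, t) * sq t) volume 0 c :=
      (hu01 ▸ (hvc.mul hsqc)).intervalIntegrable
    have hLs : L s = ∫ t in (0:ℝ)..c, sq t := by rw [hL]
    have hIu : (L s) * ubar s = ∫ t in (0:ℝ)..c, u (s, t) * sq t := by
      by_cases hL0 : L s = 0
      · have hsq0 : (∫ t in Ioc (0:ℝ) c, sq t) = 0 := by
          rw [← intervalIntegral.integral_of_le hc.le, ← hLs]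
          exact hL0
        have hnn : 0 ≤ᵐ[volume.restrict (Ioc (0:ℝ) c)] sq :=
          Filter.Eventually.of_forall (fun t => Real.sqrt_nonneg _)
        have hsint : IntegrableOn sq (Ioc (0:ℝ) c) := hInt1.1
        have hae := (integral_eq_zero_iff_of_nonneg_ae hnn hsint).mp hsq0
        have hae2 : (fun t => u (s, t) * sq t) =ᵐ[volume.restrict (Ioc (0:ℝ) c)] 0 := by
          filter_upwards [hae] with t ht
          simp only [Pi.zero_apply] at ht ⊢
          rw [ht, mul_zero]
        rw [intervalIntegral.integral_of_le hc.le, integral_eq_zero_of_ae hae2, hL0, zero_mul]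
      · rw [hubar]
        simp only
        field_simp
        rfl
    have hIv : (L s) * vbar s = ∫ t in (0:ℝ)..c, v (s, t) * sq t := by
      by_cases hL0 : L s = 0
      · have hsq0 : (∫ t in Ioc (0:ℝ) c, sq t) = 0 := by
          rw [← intervalIntegral.integral_of_le hc.le, ← hLs]
          exact hL0
        have hnn : 0 ≤ᵐ[volume.restrict (Ioc (0:ℝ) c)] sq :=
          Filter.Eventually.of_forall (fun t => Real.sqrt_nonneg _)
        have hsint : IntegrableOn sq (Ioc (0:ℝ) c) := hInt1.1
        have hae := (integral_eq_zero_iff_of_nonneg_ae hnn hsint).mp hsq0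
        have hae2 : (fun t => v (s, t) * sq t) =ᵐ[volume.restrict (Ioc (0:ℝ) c)] 0 := by
          filter_upwards [hae] with t ht
          simp only [Pi.zero_apply] at ht ⊢
          rw [ht, mul_zero]
        rw [intervalIntegral.integral_of_le hc.le, integral_eq_zero_of_ae hae2, hL0, zero_mul]
      · rw [hvbar]
        simp only
        field_simp
        rfl
    have h1 : (∫ t in Icc (0:ℝ) c, Gfun (s, t))
        = ∫ t in (0:ℝ)..c, (1 - u (s, t) * κn s + v (s, t) * κg s) * sq t := by
      rw [integral_Icc_eq_integral_Ioc, ← intervalIntegral.integral_of_le hc.le]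
    have h2 : (∫ t in (0:ℝ)..c, (1 - u (s, t) * κn s + v (s, t) * κg s) * sq t)
        = (∫ t in (0:ℝ)..c, sq t) - κn s * (∫ t in (0:ℝ)..c, u (s, t) * sq t)
          + κg s * (∫ t in (0:ℝ)..c, v (s, t) * sq t) := by
      have hfe : (fun t => (1 - u (s, t) * κn s + v (s, t) * κg s) * sq t)
          = fun t => (sq t - κn s * (u (s, t) * sq t)) + κg s * (v (s, t) * sq t) := by
        funext t; ring
      rw [hfe, intervalIntegral.integral_add (hInt1.sub (hInt2.const_mul _))
        (hInt3.const_mul _), intervalIntegral.integral_sub hInt1 (hInt2.const_mul _),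
        intervalIntegral.integral_const_mul, intervalIntegral.integral_const_mul]
    rw [h1, h2, ← hLs, ← hIu, ← hIv]
    ring
  -- Fubini
  have hRHS : (∫ q in S, Gfun q)
      = ∫ s in a..b, L s * (1 - (ubar s * κn s - vbar s * κg s)) := by
    have hvol : (volume : Measure (ℝ × ℝ)) = (volume : Measure ℝ).prod volume :=
      Measure.volume_eq_prod ℝ ℝ
    have hGint' : IntegrableOn Gfun (I ×ˢ Icc (0:ℝ) c) ((volume : Measure ℝ).prod volume) := by
      rw [← hvol, ← hS]
      exact hGint
    have hfub : (∫ q in S, Gfun q) = ∫ s in I, ∫ t in Icc (0:ℝ) c, Gfun (s, t) := by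
      rw [hS, hvol]
      exact setIntegral_prod Gfun hGint'
    rw [hfub]
    rw [setIntegral_congr_fun measurableSet_Icc (fun s hs => key s hs)]
    rw [integral_Icc_eq_integral_Ioc, ← intervalIntegral.integral_of_le hab.le]
  constructor
  · rw [ge_iff_le, ← hRHS]
    exact hle
  · rw [← hRHS]
    exact hiff
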